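/- The family of behaviors of deterministic splitters is not closed under product: over the alphabet A = {a,b} (a ≠ b), with L = {(b, aⁿ, baⁿ) : n ∈ ℕ} ⊆ U, the setwise product L·L = {xy : x,y ∈ L} is not the behavior of any deterministic splitter, although L itself is the behavior of a deterministic splitter with finitely many states. -/

import Mathlib

/-- Words over the alphabet `A`, i.e. elements of the free monoid `A*`. -/
abbrev Word (A : Type) := List A

/-- The generating set `G = {(a,ε,a) : a ∈ A} ∪ {(ε,a,a) : a ∈ A}` of the
Shuffling Monoid. -/
def genG (A : Type) : Set (Word A × Word A × Word A) :=
  {g | ∃ a : A, g = ([a], [], [a]) ∨ g = ([], [a], [a])}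

/-- Componentwise product (concatenation) of a list of triples of words. -/
def prodTriple {A : Type} (ls : List (Word A × Word A × Word A)) :
    Word A × Word A × Word A :=
  ((ls.map fun l => l.1).flatten, (ls.map fun l => l.2.1).flatten,
    (ls.map fun l => l.2.2).flatten)

/-- The Shuffling Monoid `U`: the submonoid of `A* × A* × A*` generated by `G`,
described as the set of all products of finite sequences of generators. -/
def shuffleU (A : Type) : Set (Word A × Word A × Word A) :=
  {m | ∃ ls : List (Word A × Word A × Word A), (∀ l ∈ ls, l ∈ genG A) ∧ prodTriple ls = m}

/-- A spliffer (equivalently, splitter) over `A`: a finite automaton whose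
transitions are labeled by elements of `G`. -/
structure Spliffer (A : Type) where
  Q : Type
  finQ : Finite Q
  E : Q → (Word A × Word A × Word A) → Q → Prop
  I : Set Q
  T : Set Q
  labels_mem : ∀ {q l q'}, E q l q' → l ∈ genG A

/-- Paths in a spliffer, recording the sequence of labels. -/
inductive Spliffer.Path {A : Type} (S : Spliffer A) :
    S.Q → List (Word A × Word A × Word A) → S.Q → Prop
  | nil (q : S.Q) : Spliffer.Path S q [] q
  | cons {q q' q'' : S.Q} {l : Word A × Word A × Word A}
      {ls : List (Word A × Word A × Word A)} :
      S.E q l q' → Spliffer.Path S q' ls q'' → Spliffer.Path S q (l :: ls) q''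

/-- The behavior `|S|` of a spliffer: products of the label sequences of all
successful runs. -/
def Spliffer.behavior {A : Type} (S : Spliffer A) : Set (Word A × Word A × Word A) :=
  {m | ∃ q ∈ S.I, ∃ q' ∈ S.T, ∃ ls, S.Path q ls q' ∧ prodTriple ls = m}

/-- A splitter is deterministic if it has a single initial state, for every state
and input letter there is at most one outgoing transition reading that letter,
and all transitions leaving a given state write to the same tape. -/
def Spliffer.Deterministic {A : Type} (S : Spliffer A) : Prop :=
  (∃! i, i ∈ S.I) ∧
  (∀ ⦃q l₁ q₁ l₂ q₂⦄, S.E q l₁ q₁ → S.E q l₂ q₂ → l₁.2.2 = l₂.2.2 → l₁ = l₂ ∧ q₁ = q₂) ∧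
  (∀ ⦃q l₁ q₁ l₂ q₂⦄, S.E q l₁ q₁ → S.E q l₂ q₂ →
    (l₁.1 = [] ∧ l₂.1 = []) ∨ (l₁.2.1 = [] ∧ l₂.2.1 = []))

/-- The set `L = {(b, aⁿ, baⁿ) : n ∈ ℕ}`. -/
def setLb {A : Type} (a b : A) : Set (Word A × Word A × Word A) :=
  {x | ∃ n : ℕ, x = ([b], List.replicate n a, b :: List.replicate n a)}

/-! `L` is the behavior of the two-state splitter that copies `b` to the first tape and then loops
copying `a` to the second. Suppose a deterministic splitter had behavior `L·L`. Its runs for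
`(bb, ε, bb)` and `(bb, a, bab)` start in the unique initial state and read the same letter `b`
first, so by determinism they then sit in the same state. From there the first run copies `b` to
the first tape (its second tape stays empty) and the second copies `a` to the second tape (its
first tape has no `a`): two transitions from one state writing to different tapes. -/

section Shuffle

variable {A : Type}

@[simp]
lemma prodTriple_nil : prodTriple ([] : List (Word A × Word A × Word A)) = ([], [], []) := rfl

@[simp]
lemma prodTriple_cons (l : Word A × Word A × Word A) (ls : List (Word A × Word A × Word A)) :
    prodTriple (l :: ls) =
      (l.1 ++ (prodTriple ls).1, l.2.1 ++ (prodTriple ls).2.1, l.2.2 ++ (prodTriple ls).2.2) := by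
  simp [prodTriple]

lemma prodTriple_replicate (n : ℕ) (l : Word A × Word A × Word A) :
    prodTriple (List.replicate n l) =
      ((List.replicate n l.1).flatten, (List.replicate n l.2.1).flatten,
        (List.replicate n l.2.2).flatten) := by
  simp [prodTriple, List.map_replicate]

lemma subset_prodTriple_fst {l : Word A × Word A × Word A} {ls : List (Word A × Word A × Word A)}
    (hl : l ∈ ls) : l.1 ⊆ (prodTriple ls).1 :=
  fun _ hx => List.mem_flatten.2 ⟨l.1, List.mem_map_of_mem (f := fun l => l.1) hl, hx⟩

lemma subset_prodTriple_snd_fst {l : Word A × Word A × Word A}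
    {ls : List (Word A × Word A × Word A)} (hl : l ∈ ls) : l.2.1 ⊆ (prodTriple ls).2.1 :=
  fun _ hx => List.mem_flatten.2 ⟨l.2.1, List.mem_map_of_mem (f := fun l => l.2.1) hl, hx⟩

lemma exists_snd_snd_eq_singleton_of_mem_genG {l : Word A × Word A × Word A} (hl : l ∈ genG A) :
    ∃ c, l.2.2 = [c] := by
  obtain ⟨c, rfl | rfl⟩ := hl <;> exact ⟨c, rfl⟩

lemma fst_eq_nil_iff_of_mem_genG {l : Word A × Word A × Word A} (hl : l ∈ genG A) :
    l.1 = [] ↔ l.2.1 ≠ [] := by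
  obtain ⟨c, rfl | rfl⟩ := hl <;> simp

end Shuffle

namespace Spliffer

variable {A : Type} {S : Spliffer A}

lemma path_cons_iff {q q'' : S.Q} {l : Word A × Word A × Word A}
    {ls : List (Word A × Word A × Word A)} :
    S.Path q (l :: ls) q'' ↔ ∃ q', S.E q l q' ∧ S.Path q' ls q'' :=
  ⟨fun | .cons e p => ⟨_, e, p⟩, fun ⟨_, e, p⟩ => .cons e p⟩

lemma path_nil_iff {q q' : S.Q} : S.Path q [] q' ↔ q = q' :=
  ⟨fun | .nil _ => rfl, fun h => h ▸ .nil q⟩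

lemma Path.exists_cons_of_snd_snd_eq_cons {q q' : S.Q} {ls : List (Word A × Word A × Word A)}
    {c : A} {u : Word A} (h : S.Path q ls q') (hu : (prodTriple ls).2.2 = c :: u) :
    ∃ l ls' p, ls = l :: ls' ∧ S.E q l p ∧ S.Path p ls' q' ∧ l.2.2 = [c] ∧
      (prodTriple ls').2.2 = u := by
  cases h with
  | nil => simp at hu
  | @cons _ p _ l ls' e h' =>
    obtain ⟨d, hd⟩ := exists_snd_snd_eq_singleton_of_mem_genG (S.labels_mem e)
    simp only [prodTriple_cons, hd, List.singleton_append, List.cons.injEq] at hu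
    exact ⟨l, ls', p, rfl, e, h', hu.1 ▸ hd, hu.2⟩

theorem Deterministic.exists_edges_after_common_prefix (hS : S.Deterministic) {q q₁ q₂ : S.Q}
    {ls₁ ls₂ : List (Word A × Word A × Word A)} {w u₁ u₂ : Word A} {c₁ c₂ : A}
    (h₁ : S.Path q ls₁ q₁) (h₂ : S.Path q ls₂ q₂)
    (hw₁ : (prodTriple ls₁).2.2 = w ++ c₁ :: u₁) (hw₂ : (prodTriple ls₂).2.2 = w ++ c₂ :: u₂) :
    ∃ p l₁ l₂ p₁ p₂, l₁ ∈ ls₁ ∧ l₂ ∈ ls₂ ∧ S.E p l₁ p₁ ∧ S.E p l₂ p₂ ∧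
      l₁.2.2 = [c₁] ∧ l₂.2.2 = [c₂] := by
  induction w generalizing q ls₁ ls₂ with
  | nil =>
    obtain ⟨l₁, _, p₁, rfl, e₁, -, hc₁, -⟩ := h₁.exists_cons_of_snd_snd_eq_cons hw₁
    obtain ⟨l₂, _, p₂, rfl, e₂, -, hc₂, -⟩ := h₂.exists_cons_of_snd_snd_eq_cons hw₂
    exact ⟨q, l₁, l₂, p₁, p₂, List.mem_cons_self, List.mem_cons_self, e₁, e₂, hc₁, hc₂⟩
  | cons d w ih =>
    obtain ⟨l₁, _, p₁, rfl, e₁, h₁', hd₁, hw₁'⟩ := h₁.exists_cons_of_snd_snd_eq_cons hw₁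
    obtain ⟨l₂, _, p₂, rfl, e₂, h₂', hd₂, hw₂'⟩ := h₂.exists_cons_of_snd_snd_eq_cons hw₂
    obtain ⟨-, rfl⟩ := hS.2.1 e₁ e₂ (hd₁.trans hd₂.symm)
    obtain ⟨p, l₁', l₂', p₁', p₂', hl₁, hl₂, rest⟩ := ih h₁' h₂' hw₁' hw₂'
    exact ⟨p, l₁', l₂', p₁', p₂', List.mem_cons_of_mem _ hl₁, List.mem_cons_of_mem _ hl₂, rest⟩

end Spliffer

section SetLb

variable {A : Type} (a b : A)

abbrev setLbSplitter : Spliffer A where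
  Q := Bool
  finQ := inferInstance
  E q l q' := q' = true ∧ l = if q then ([], [a], [a]) else ([b], [], [b])
  I := {false}
  T := {true}
  labels_mem := by
    rintro (_ | _) l q' ⟨-, rfl⟩
    · exact ⟨b, Or.inl rfl⟩
    · exact ⟨a, Or.inr rfl⟩

lemma setLbSplitter_deterministic : (setLbSplitter a b).Deterministic := by
  refine ⟨⟨false, rfl, fun _ h => h⟩, ?_, ?_⟩
  · rintro q l₁ q₁ l₂ q₂ ⟨rfl, rfl⟩ ⟨rfl, rfl⟩ -
    exact ⟨rfl, rfl⟩
  · rintro (_ | _) l₁ q₁ l₂ q₂ ⟨-, rfl⟩ ⟨-, rfl⟩ <;> simp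

lemma setLbSplitter_path_true_iff {q : Bool} {ls : List (Word A × Word A × Word A)} :
    (setLbSplitter a b).Path true ls q ↔
      q = true ∧ ls = List.replicate ls.length ([], [a], [a]) := by
  induction ls with
  | nil => rw [Spliffer.path_nil_iff]; simp [eq_comm]
  | cons l ls ih =>
    simp only [Spliffer.path_cons_iff, ite_true, and_assoc, exists_eq_left, ih,
      List.length_cons, List.replicate_succ, List.cons.injEq]
    tauto

lemma behavior_setLbSplitter : (setLbSplitter a b).behavior = setLb a b := by
  ext m
  simp only [Spliffer.behavior, setLb, Set.mem_singleton_iff, exists_eq_left, Set.mem_ofPred_eq]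
  constructor
  · rintro ⟨_ | ⟨l, ls⟩, hp, rfl⟩
    · exact absurd (Spliffer.path_nil_iff.1 hp) Bool.false_ne_true
    · obtain ⟨_, ⟨rfl, rfl⟩, h⟩ := Spliffer.path_cons_iff.1 hp
      obtain ⟨-, hls⟩ := (setLbSplitter_path_true_iff a b).1 h
      rw [hls]
      exact ⟨ls.length, by simp [prodTriple_replicate]⟩
  · rintro ⟨n, rfl⟩
    have h : (setLbSplitter a b).Path true (List.replicate n ([], [a], [a])) true :=
      (setLbSplitter_path_true_iff a b).2 ⟨rfl, by rw [List.length_replicate]⟩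
    exact ⟨_, .cons ⟨rfl, rfl⟩ h, by simp [prodTriple_replicate]⟩

end SetLb

theorem drat_not_closed_under_product_general {A : Type} (a b : A) (hab : a ≠ b) :
    (∃ S : Spliffer A, S.Deterministic ∧ S.behavior = setLb a b) ∧
    ¬ ∃ S : Spliffer A, S.Deterministic ∧ S.behavior =
        {m : Word A × Word A × Word A | ∃ x ∈ setLb a b, ∃ y ∈ setLb a b,
          m = (x.1 ++ y.1, x.2.1 ++ y.2.1, x.2.2 ++ y.2.2)} := by
  refine ⟨⟨setLbSplitter a b, setLbSplitter_deterministic a b, behavior_setLbSplitter a b⟩, ?_⟩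
  rintro ⟨S, hS, hbeh⟩
  obtain ⟨i, -, hI⟩ := hS.1
  have run (m n : ℕ) : ∃ ls q, S.Path i ls q ∧ prodTriple ls =
      ([b, b], List.replicate m a ++ List.replicate n a,
        b :: List.replicate m a ++ b :: List.replicate n a) := by
    have hmn : ([b, b], List.replicate m a ++ List.replicate n a,
        b :: List.replicate m a ++ b :: List.replicate n a) ∈ S.behavior := by
      rw [hbeh]
      exact ⟨_, ⟨m, rfl⟩, _, ⟨n, rfl⟩, rfl⟩
    obtain ⟨i', hi', q, -, ls, hp, hls⟩ := hmn
    exact ⟨ls, q, hI i' hi' ▸ hp, hls⟩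
  obtain ⟨ls₁, _, hp₁, hls₁⟩ := run 0 0
  obtain ⟨ls₂, _, hp₂, hls₂⟩ := run 1 0
  obtain ⟨p, l₁, l₂, _, _, hl₁, hl₂, e₁, e₂, hc₁, hc₂⟩ :=
    hS.exists_edges_after_common_prefix (w := [b]) (c₁ := b) (u₁ := []) (c₂ := a) (u₂ := [b])
      hp₁ hp₂ (by simp [hls₁]) (by simp [hls₂])
  have h₁ : l₁.2.1 = [] := List.subset_nil.1 (by simpa [hls₁] using subset_prodTriple_snd_fst hl₁)
  have h₂ : l₂.1 = [] := by
    obtain ⟨c, rfl | rfl⟩ := S.labels_mem e₂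
    · obtain rfl : c = a := by simpa using hc₂
      simpa [hls₂, hab] using subset_prodTriple_fst hl₂
    · rfl
  rcases hS.2.2 e₁ e₂ with ⟨h, -⟩ | ⟨-, h⟩
  · exact (fst_eq_nil_iff_of_mem_genG (S.labels_mem e₁)).1 h h₁
  · exact (fst_eq_nil_iff_of_mem_genG (S.labels_mem e₂)).1 h₂ h

/-- over `A = {a,b}`, with `L = {(b, aⁿ, baⁿ) : n ∈ ℕ}`, the product
`L·L` is not the behavior of any deterministic splitter, although `L` is. -/
theorem drat_not_closed_under_product {A : Type} (a b : A) (hab : a ≠ b)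
    (hA : ∀ x : A, x = a ∨ x = b) :
    (∃ S : Spliffer A, S.Deterministic ∧ S.behavior = setLb a b) ∧
    ¬ ∃ S : Spliffer A, S.Deterministic ∧ S.behavior =
        {m : Word A × Word A × Word A | ∃ x ∈ setLb a b, ∃ y ∈ setLb a b,
          m = (x.1 ++ y.1, x.2.1 ++ y.2.1, x.2.2 ++ y.2.2)} :=
  drat_not_closed_under_product_general a b hab
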